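/- Let a, ℓ ∈ ℝ and consider the quadratic system P(x,y) = (2a−1)ℓx − a(2ℓ−1)y + 2a(a−ℓ)(2ℓ−1)x² − 2a²(2ℓ−1)²xy, Q(x,y) = y·(2(2a−1)ℓ + 2a(2a−2ℓ−1)(2ℓ−1)x − 4a²(2ℓ−1)²y). Then y = 0 and y − x² = 0 are invariant algebraic curves of the system; explicitly, there exist real polynomials k₁(x,y) and k₂(x,y) of degree at most 1 such that for all (x,y) ∈ ℝ²: Q(x,y) = k₁(x,y)·y and Q(x,y) − 2x·P(x,y) = k₂(x,y)·(y − x²). -/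

import Mathlib

/-- Evaluation of a polynomial in two variables at `(x, y)`. -/
noncomputable def ev2 (p : MvPolynomial (Fin 2) ℝ) (x y : ℝ) : ℝ :=
  MvPolynomial.eval ![x, y] p

/-- `P(x,y)` of the new biparametric family of quadratic systems of the paper. -/
noncomputable def Pnew (a ℓ x y : ℝ) : ℝ :=
  (2 * a - 1) * ℓ * x - a * (2 * ℓ - 1) * y + 2 * a * (a - ℓ) * (2 * ℓ - 1) * x ^ 2
    - 2 * a ^ 2 * (2 * ℓ - 1) ^ 2 * x * y

/-- `Q(x,y)` of the new biparametric family of quadratic systems of the paper. -/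
noncomputable def Qnew (a ℓ x y : ℝ) : ℝ :=
  y * (2 * (2 * a - 1) * ℓ + 2 * a * (2 * a - 2 * ℓ - 1) * (2 * ℓ - 1) * x
    - 4 * a ^ 2 * (2 * ℓ - 1) ^ 2 * y)

/-! Substituting `y = x²` makes `Q − 2xP` vanish identically, so `y − x²` divides it, with an
affine quotient; the cofactor of `y` is simply the bracket in `Q`. -/

open MvPolynomial

section Affine

variable {σ R : Type*} [CommSemiring R] [Fintype σ]

noncomputable def affine (c : R) (v : σ → R) : MvPolynomial σ R :=
  C c + ∑ i, C (v i) * X i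

theorem totalDegree_affine_le (c : R) (v : σ → R) : (affine c v).totalDegree ≤ 1 := by
  refine (totalDegree_add _ _).trans (max_le (by simp) (totalDegree_finsetSum_le fun i _ => ?_))
  rw [C_mul_X_eq_monomial]
  exact (totalDegree_monomial_le _ _).trans (by simp)

theorem eval_affine (c : R) (v x : σ → R) : eval x (affine c v) = c + ∑ i, v i * x i := by
  simp [affine]

end Affine

theorem ev2_affine (c : ℝ) (v : Fin 2 → ℝ) (x y : ℝ) :
    ev2 (affine c v) x y = c + v 0 * x + v 1 * y := by
  simp [ev2, eval_affine, Fin.sum_univ_two, add_assoc]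

noncomputable def cofactorY (a ℓ : ℝ) : MvPolynomial (Fin 2) ℝ :=
  affine (2 * (2 * a - 1) * ℓ)
    ![2 * a * (2 * a - 2 * ℓ - 1) * (2 * ℓ - 1), -4 * a ^ 2 * (2 * ℓ - 1) ^ 2]

noncomputable def cofactorParabola (a ℓ : ℝ) : MvPolynomial (Fin 2) ℝ :=
  affine (2 * (2 * a - 1) * ℓ)
    ![4 * a * (a - ℓ) * (2 * ℓ - 1), -4 * a ^ 2 * (2 * ℓ - 1) ^ 2]

theorem Qnew_eq_cofactorY_mul (a ℓ x y : ℝ) : Qnew a ℓ x y = ev2 (cofactorY a ℓ) x y * y := by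
  rw [cofactorY, ev2_affine, Qnew]
  simp only [Matrix.cons_val_zero, Matrix.cons_val_one]
  ring

theorem Qnew_sub_two_mul_Pnew_eq_cofactorParabola_mul (a ℓ x y : ℝ) :
    Qnew a ℓ x y - 2 * x * Pnew a ℓ x y = ev2 (cofactorParabola a ℓ) x y * (y - x ^ 2) := by
  rw [cofactorParabola, ev2_affine, Qnew, Pnew]
  simp only [Matrix.cons_val_zero, Matrix.cons_val_one]
  ring

/-- `y = 0` and `y − x² = 0` are invariant algebraic curves of the new biparametric
family of quadratic systems: there are polynomial cofactors `k₁, k₂` of degree at most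
one with `Q = k₁ y` and `Q − 2x P = k₂ (y − x²)`. -/
theorem stmt_15 (a ℓ : ℝ) :
    ∃ k₁ k₂ : MvPolynomial (Fin 2) ℝ,
      k₁.totalDegree ≤ 1 ∧ k₂.totalDegree ≤ 1 ∧
      ∀ x y : ℝ,
        Qnew a ℓ x y = ev2 k₁ x y * y ∧
        Qnew a ℓ x y - 2 * x * Pnew a ℓ x y = ev2 k₂ x y * (y - x ^ 2) :=
  ⟨cofactorY a ℓ, cofactorParabola a ℓ, totalDegree_affine_le _ _, totalDegree_affine_le _ _,
    fun x y =>
      ⟨Qnew_eq_cofactorY_mul a ℓ x y, Qnew_sub_two_mul_Pnew_eq_cofactorParabola_mul a ℓ x y⟩⟩
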